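/- No recursive amplification construction with a base function on d variables can be d-th order sensitive when composed with base functions of sensitivity order less than d. Precisely: if f^1 : F_2^d → F_2 is not d-th order sensitive (i.e., has sensitivity order < d), and f^u(x) = f^1(ĝ_1(block_1), ..., ĝ_d(block_d)) where each ĝ_j ∈ {f^{u−1}, 1 ⊕ f^{u−1}}, then f^u is not d-th order sensitive for any u ≥ 1. -/

import Mathlib

/-!
Write `f^u = f ∘ Φ`, where the `j`-th coordinate of `Φ x` is the (possibly complemented)
inner value of block `j`. If `f^u` is `k`-th order sensitive at `x`, pick one coordinate
`p j` in each block. Flipping the single bit `p j` must change `f^u`, and it changes no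
block other than `j`, so it flips the `j`-th inner value. Hence flipping `{p j | j ∈ T}`
flips exactly the inner values indexed by `T`, and `f` is `k`-th order sensitive at `Φ x`.
No induction on `u` is needed.
-/

/-- Flip the bits of `x` indexed by `S`. -/
def flipS {ι : Type*} [DecidableEq ι] (x : ι → Bool) (S : Finset ι) : ι → Bool :=
  fun i => if i ∈ S then !x i else x i

/-- General recursive amplification with sign choices `ε`:
`f^{u+1}(x) = f(…, ε_u(j) ⊕ f^u(block_j x), …)`, so each inner function is
`f^u` or its complement. -/
def Gu (d : ℕ) (f : (Fin d → Bool) → Bool) (ε : ℕ → Fin d → Bool) :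
    (u : ℕ) → ((Fin (u + 1) → Fin d) → Bool) → Bool
  | 0 => fun x => f (fun i => x (fun _ => i))
  | u + 1 => fun x => f (fun j => xor (ε u j) (Gu d f ε u (fun t => x (Fin.cons j t))))

def IsSensitiveOfOrder {ι : Type*} [DecidableEq ι] (h : (ι → Bool) → Bool) (k : ℕ) : Prop :=
  ∃ x, ∀ S : Finset ι, 1 ≤ S.card → S.card ≤ k → h (flipS x S) ≠ h x

@[simp]
lemma flipS_empty {ι : Type*} [DecidableEq ι] (x : ι → Bool) : flipS x ∅ = x := by
  funext i
  simp [flipS]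

def IsBlockLocal {ι κ : Type*} (Φ : (ι → Bool) → κ → Bool) (b : ι → κ) : Prop :=
  ∀ x y j, (∀ i, b i = j → x i = y i) → Φ x j = Φ y j

section BlockLocal

variable {ι κ : Type*} [DecidableEq ι] {Φ : (ι → Bool) → κ → Bool} {b : ι → κ}

lemma IsBlockLocal.flipS_congr (hΦ : IsBlockLocal Φ b) (x : ι → Bool) {S S' : Finset ι}
    {j : κ} (h : ∀ i, b i = j → (i ∈ S ↔ i ∈ S')) : Φ (flipS x S) j = Φ (flipS x S') j :=
  hΦ _ _ j fun i hi => by simp only [flipS, h i hi]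

lemma IsBlockLocal.flipS_eq_of_forall_ne (hΦ : IsBlockLocal Φ b) (x : ι → Bool)
    {S : Finset ι} {j : κ} (h : ∀ i ∈ S, b i ≠ j) : Φ (flipS x S) j = Φ x j := by
  simpa using hΦ.flipS_congr x (S' := ∅) fun i hi => ⟨fun hS => (h i hS hi).elim, by simp⟩

theorem IsSensitiveOfOrder.of_comp [DecidableEq κ] (hΦ : IsBlockLocal Φ b) {p : κ → ι}
    (hp : Function.LeftInverse b p) {g : (κ → Bool) → Bool} {k : ℕ}
    (h : IsSensitiveOfOrder (g ∘ Φ) k) : IsSensitiveOfOrder g k := by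
  obtain ⟨x, hx⟩ := h
  rcases Nat.eq_zero_or_pos k with rfl | hk
  · exact ⟨Φ x, fun S h1 h2 => absurd (h1.trans h2) (by omega)⟩
  have flip_single : ∀ j, Φ (flipS x {p j}) j = !Φ x j := by
    intro j
    by_contra hne
    have hfix : Φ (flipS x {p j}) = Φ x := by
      funext j'
      by_cases hj : j' = j
      · subst hj
        simpa using hne
      · exact hΦ.flipS_eq_of_forall_ne x (by simpa [hp j] using Ne.symm hj)
    exact hx {p j} (by simp) (by rwa [Finset.card_singleton]) (congrArg g hfix)
  let P : κ ↪ ι := ⟨p, hp.injective⟩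
  refine ⟨Φ x, fun T h1 h2 => ?_⟩
  have flip_map : Φ (flipS x (T.map P)) = flipS (Φ x) T := by
    funext j
    have mem_map_iff : ∀ i, b i = j → (i ∈ T.map P ↔ j ∈ T ∧ i = p j) := by
      rintro i rfl
      simp only [Finset.mem_map, P, Function.Embedding.coeFn_mk]
      constructor
      · rintro ⟨a, ha, rfl⟩
        rw [hp a]
        exact ⟨ha, rfl⟩
      · rintro ⟨hi, hpi⟩
        exact ⟨b i, hi, hpi.symm⟩
    by_cases hj : j ∈ T
    · rw [hΦ.flipS_congr x (S' := {p j}) fun i hi => by simp [mem_map_iff i hi, hj],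
        flip_single]
      simp [flipS, hj]
    · rw [hΦ.flipS_eq_of_forall_ne x fun i hi hbi => hj ((mem_map_iff i hbi).1 hi).1]
      simp [flipS, hj]
  simpa [flip_map] using hx (T.map P) (by simpa using h1) (by simpa using h2)

end BlockLocal

namespace Gu

variable (d : ℕ) (f : (Fin d → Bool) → Bool) (ε : ℕ → Fin d → Bool)

/-- The paper's `ĝ_j(block_j x)`, where block `j` is `{i | i 0 = j}`. -/
def blockValue : (u : ℕ) → ((Fin (u + 1) → Fin d) → Bool) → Fin d → Bool
  | 0, x, j => x fun _ => j
  | v + 1, x, j => xor (ε v j) (Gu d f ε v fun t => x (Fin.cons j t))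

lemma eq_comp_blockValue (u : ℕ) : Gu d f ε u = f ∘ blockValue d f ε u := by
  cases u <;> rfl

lemma isBlockLocal_blockValue (u : ℕ) :
    IsBlockLocal (blockValue d f ε u) fun i => i 0 := by
  intro x y j h
  cases u with
  | zero => exact h _ rfl
  | succ v =>
    simp only [blockValue]
    congr 2
    funext t
    exact h _ (by simp)

end Gu

/-- If the base function `f` is not `d`-th order sensitive, then no recursive
amplification of it (with arbitrary complementations) is `d`-th order sensitive. -/
theorem stmt18 (d : ℕ) (f : (Fin d → Bool) → Bool)
    (hf : ¬ ∃ x : Fin d → Bool,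
      ∀ S : Finset (Fin d), 1 ≤ S.card → S.card ≤ d → f (flipS x S) ≠ f x)
    (ε : ℕ → Fin d → Bool) :
    ∀ u : ℕ, ¬ ∃ x : (Fin (u + 1) → Fin d) → Bool,
      ∀ S : Finset (Fin (u + 1) → Fin d), 1 ≤ S.card → S.card ≤ d →
        Gu d f ε u (flipS x S) ≠ Gu d f ε u x := by
  intro u hGu
  have hcomp : IsSensitiveOfOrder (f ∘ Gu.blockValue d f ε u) d :=
    Gu.eq_comp_blockValue d f ε u ▸ hGu
  exact hf (hcomp.of_comp (Gu.isBlockLocal_blockValue d f ε u) (p := fun j _ => j)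
    fun _ => rfl)
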